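/- Assume p ≡ 3 (mod 4). Suppose λ ∈ K̄ has order 2 and there is an odd natural number n with λ(z) = −zⁿ for all z ∈ (ℤ/p)* and with (p − 1)/2 dividing n² − 1. Then n ≡ −1 (mod p − 1), λ is the map z ↦ −1/z, and in particular the map z ↦ −1/z belongs to G. -/

import Mathlib

instance (X : Type*) [DecidableEq X] : DecidableEq (OnePoint X) :=
  inferInstanceAs (DecidableEq (Option X))

/-- The translation `z ↦ z + a` on `ℤ/p ∪ {∞}`, fixing `∞`. -/
def ptrans (p : ℕ) (a : ZMod p) : Equiv.Perm (OnePoint (ZMod p)) :=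
  Equiv.optionCongr (Equiv.addRight a)

/-- The map `z ↦ a z` on `ℤ/p ∪ {∞}`, fixing `∞`, for `a ≠ 0`. -/
def pmul (p : ℕ) [Fact p.Prime] (a : ZMod p) (ha : a ≠ 0) : Equiv.Perm (OnePoint (ZMod p)) :=
  Equiv.optionCongr (Equiv.mulLeft₀ a ha)

/-- Multiplication by `a` extended to `ℤ/p ∪ {∞}` (with `a·∞ = ∞`). -/
def opSmul (p : ℕ) (a : ZMod p) : OnePoint (ZMod p) → OnePoint (ZMod p) :=
  fun x => Option.map (fun z => a * z) x

/-- Underlying function of the map `z ↦ -1/z`. -/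
def negInvFun (p : ℕ) : OnePoint (ZMod p) → OnePoint (ZMod p)
  | Option.none => Option.some (0 : ZMod p)
  | Option.some z => if z = 0 then Option.none else Option.some (-z⁻¹ : ZMod p)

/-- The permutation `z ↦ -1/z` of `ℤ/p ∪ {∞}` (sending `0 ↦ ∞` and `∞ ↦ 0`). -/
def negInvPerm (p : ℕ) [Fact p.Prime] : Equiv.Perm (OnePoint (ZMod p)) :=
  Function.Involutive.toPerm (negInvFun p) (by
    intro x
    match x with
    | Option.none => simp [negInvFun] <;> rfl
    | Option.some z =>
      by_cases hz : z = 0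
      · simp [negInvFun, hz] <;> rfl
      · have h1 : (-z⁻¹ : ZMod p) ≠ 0 := by simp [hz]
        simp [negInvFun, hz, h1, inv_neg, inv_inv] <;> rfl)

/-- The involution `(0 ∞)(1 3)(2 6)(4 5)`. -/
def inv1 (p : ℕ) : Equiv.Perm (OnePoint (ZMod p)) :=
  Equiv.swap ((0 : ZMod p) : OnePoint (ZMod p)) OnePoint.infty *
  Equiv.swap ((1 : ZMod p) : OnePoint (ZMod p)) ((3 : ZMod p) : OnePoint (ZMod p)) *
  Equiv.swap ((2 : ZMod p) : OnePoint (ZMod p)) ((6 : ZMod p) : OnePoint (ZMod p)) *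
  Equiv.swap ((4 : ZMod p) : OnePoint (ZMod p)) ((5 : ZMod p) : OnePoint (ZMod p))

/-- The involution `(0 ∞)(1 5)(2 3)(4 6)`. -/
def inv2 (p : ℕ) : Equiv.Perm (OnePoint (ZMod p)) :=
  Equiv.swap ((0 : ZMod p) : OnePoint (ZMod p)) OnePoint.infty *
  Equiv.swap ((1 : ZMod p) : OnePoint (ZMod p)) ((5 : ZMod p) : OnePoint (ZMod p)) *
  Equiv.swap ((2 : ZMod p) : OnePoint (ZMod p)) ((3 : ZMod p) : OnePoint (ZMod p)) *
  Equiv.swap ((4 : ZMod p) : OnePoint (ZMod p)) ((6 : ZMod p) : OnePoint (ZMod p))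

/-- The set of nonzero squares in `ℤ/p`. -/
def Rset (p : ℕ) : Set (ZMod p) := {a | a ≠ 0 ∧ IsSquare a}

/-- The set of nonsquares in `(ℤ/p)*`. -/
def Nset (p : ℕ) : Set (ZMod p) := {a | a ≠ 0 ∧ ¬ IsSquare a}


/-!
The stabiliser of `∞` in `G` has order `p (p - 1) / 2`, so the translations form its unique
Sylow `p`-subgroup and are normalised by it; an element of `G` fixing `∞` is therefore affine on
`ℤ/p`, and one fixing `∞`, `0` and a third point is trivial. The element `u = λ ∘ (z ↦ z + 1)`
cycles `∞ → 0 → -1 → ∞`, hence `u³ = 1`, which for `q z = zⁿ` (an involution of `(ℤ/p)*`, as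
`λ² = 1`) is the functional equation `q (1 - q z) = 1 - q (1 - z)`. A fixed point `u ≠ 0, 1` of
`q` then satisfies `q (1 - u) = 1/2`, so `±1` are the only fixed points. An element of odd prime
order `r ∣ gcd((p - 1)/2, n - 1)` would be another one, so `(p - 1)/2` (odd, as `p ≡ 3 mod 4`)
is coprime to `n - 1` and divides `n + 1`; thus `p - 1 ∣ n + 1` and `zⁿ = z⁻¹`.
-/

open OnePoint

section Translations

variable {p : ℕ}

@[simp]
lemma ptrans_coe (a z : ZMod p) : ptrans p a (z : OnePoint (ZMod p)) = ↑(z + a) := rfl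

@[simp]
lemma ptrans_infty (a : ZMod p) : ptrans p a ∞ = ∞ := rfl

variable (p) in
def ptransHom : Multiplicative (ZMod p) →* Equiv.Perm (OnePoint (ZMod p)) where
  toFun a := ptrans p a.toAdd
  map_one' := by
    ext x
    cases x <;> simp
  map_mul' a b := by
    ext x
    cases x <;> simp [add_comm, add_left_comm]

@[simp]
lemma ptransHom_apply (a : Multiplicative (ZMod p)) : ptransHom p a = ptrans p a.toAdd := rfl

lemma ptransHom_injective : Function.Injective (ptransHom p) := by
  intro a b hab
  simpa using congrArg (fun g : Equiv.Perm (OnePoint (ZMod p)) => g (0 : ZMod p)) hab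

lemma card_range_ptransHom [NeZero p] : Nat.card (ptransHom p).range = p := by
  rw [← Nat.card_congr (MonoidHom.ofInjective ptransHom_injective).toEquiv]
  simp

lemma ptrans_pow_self (a : ZMod p) : ptrans p a ^ p = 1 := by
  change ptransHom p (.ofAdd a) ^ p = 1
  rw [← map_pow, ← ofAdd_nsmul, nsmul_eq_mul, ZMod.natCast_self, zero_mul, ofAdd_zero, map_one]

lemma ptrans_inv (a : ZMod p) : (ptrans p a)⁻¹ = ptrans p (-a) := by
  change (ptransHom p (.ofAdd a))⁻¹ = ptransHom p (.ofAdd (-a))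
  rw [← map_inv]
  rfl

lemma apply_coe_eq_of_conj_ptrans [NeZero p] {h : Equiv.Perm (OnePoint (ZMod p))}
    {b c : ZMod p} (hb : h * ptrans p 1 * h⁻¹ = ptrans p b) (hc : h (0 : ZMod p) = c) (z : ZMod p) :
    h z = ↑(c + z * b) := by
  have hstep : ∀ w : ZMod p, h ↑(w + 1) = ptrans p b (h w) := fun w => by
    rw [← hb]
    simp
  rw [← ZMod.natCast_zmod_val z]
  induction z.val with
  | zero => simpa using hc
  | succ k ih =>
    push_cast
    rw [hstep, ih, ptrans_coe]
    ring_nf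

end Translations

/-- Sylow: a subgroup of order `p` and index `< p` is the unique Sylow `p`-subgroup. -/
theorem Subgroup.mem_of_pow_eq_one_of_index_lt {H : Type*} [Group H] [Finite H] {p : ℕ}
    [Fact p.Prime] {T : Subgroup H} (hT : Nat.card T = p) (hidx : T.index < p) {x : H}
    (hx : x ^ p = 1) : x ∈ T := by
  have hidx₀ : 0 < T.index := Nat.pos_of_ne_zero T.index_ne_zero_of_finite
  have hTp : IsPGroup p T := .of_card (n := 1) (by rw [hT, pow_one])
  let P := hTp.toSylow fun h => (Nat.le_of_dvd hidx₀ h).not_gt hidx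
  have hcard : Nat.card (Sylow p H) = 1 :=
    (card_sylow_modEq_one p H).eq_of_lt_of_lt
      ((Nat.le_of_dvd hidx₀ P.card_dvd_index).trans_lt hidx) (Fact.out : p.Prime).one_lt
  have : Subsingleton (Sylow p H) := (Nat.card_eq_one_iff_unique.mp hcard).1
  have hxp : IsPGroup p (Subgroup.zpowers x) :=
    .of_card_dvd_pow (n := 1) <| by
      rw [Nat.card_zpowers, pow_one]
      exact orderOf_dvd_of_pow_eq_one hx
  obtain ⟨Q, hQ⟩ := hxp.exists_le_sylow
  rw [Subsingleton.elim Q P] at hQ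
  exact hQ (Subgroup.mem_zpowers x)

theorem Subgroup.mem_of_pow_eq_one_of_relIndex_lt {K : Type*} [Group K] [Finite K] {p : ℕ}
    [Fact p.Prime] {S T : Subgroup K} (hTS : T ≤ S) (hT : Nat.card T = p)
    (hidx : T.relIndex S < p) {x : K} (hxS : x ∈ S) (hx : x ^ p = 1) : x ∈ T := by
  have hT' : Nat.card (T.subgroupOf S) = p := by
    rw [Nat.card_congr (Subgroup.subgroupOfEquivOfLe hTS).toEquiv, hT]
  have := Subgroup.mem_of_pow_eq_one_of_index_lt hT' hidx (x := ⟨x, hxS⟩) (Subtype.ext hx)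
  exact Subgroup.mem_subgroupOf.mp this

lemma Nat.cube_sub_self_div_two {p : ℕ} (hp : Odd p) :
    (p ^ 3 - p) / 2 = (p + 1) * (p * ((p - 1) / 2)) := by
  obtain ⟨m, rfl⟩ := hp
  rw [show (2 * m + 1 - 1) / 2 = m by omega]
  refine Nat.div_eq_of_eq_mul_left two_pos (Nat.sub_eq_of_eq_add ?_)
  ring

/-- `(p³ - p) / 2` is the order of `PSL₂(𝔽_p)`, which acts on `ℤ/p ∪ {∞}` by Möbius maps. -/
structure IsPSL2Like (p : ℕ) (G : Subgroup (Equiv.Perm (OnePoint (ZMod p)))) : Prop where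
  exists_apply_eq : ∀ x y : OnePoint (ZMod p), ∃ g ∈ G, g x = y
  card_eq : Nat.card G = (p ^ 3 - p) / 2
  ptrans_mem : ∀ a : ZMod p, ptrans p a ∈ G

namespace IsPSL2Like

variable {p : ℕ} [Fact p.Prime] {G : Subgroup (Equiv.Perm (OnePoint (ZMod p)))}

lemma card_stabilizer_infty (hG : IsPSL2Like p G) (hp : Odd p) :
    Nat.card (MulAction.stabilizer G (∞ : OnePoint (ZMod p))) = p * ((p - 1) / 2) := by
  have : MulAction.IsPretransitive G (OnePoint (ZMod p)) :=
    ⟨fun x y => let ⟨g, hg, hgxy⟩ := hG.exists_apply_eq x y; ⟨⟨g, hg⟩, hgxy⟩⟩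
  have hindex := (MulAction.stabilizer G (∞ : OnePoint (ZMod p))).index_mul_card
  rw [MulAction.index_stabilizer_of_transitive, hG.card_eq, Nat.cube_sub_self_div_two hp,
    show Nat.card (OnePoint (ZMod p)) = p + 1 from Finite.card_option.trans (by simp)] at hindex
  exact Nat.eq_of_mul_eq_mul_left p.succ_pos hindex

lemma exists_ptrans_eq_conj (hG : IsPSL2Like p G) (hp : Odd p)
    {g : Equiv.Perm (OnePoint (ZMod p))} (hg : g ∈ G) (hg_infty : g ∞ = ∞) (a : ZMod p) :
    ∃ b, g * ptrans p a * g⁻¹ = ptrans p b := by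
  set S := (MulAction.stabilizer G (∞ : OnePoint (ZMod p))).map G.subtype
  set T := (ptransHom p).range
  have hTS : T ≤ S := by
    rintro _ ⟨a, rfl⟩
    exact ⟨⟨ptrans p a.toAdd, hG.ptrans_mem _⟩, rfl, rfl⟩
  have hS : Nat.card S = p * ((p - 1) / 2) := by
    rw [Subgroup.card_map_of_injective G.subtype_injective, hG.card_stabilizer_infty hp]
  have hidx : T.relIndex S = (p - 1) / 2 := by
    have h := Subgroup.relIndex_mul_relIndex _ _ _ bot_le hTS
    rw [Subgroup.relIndex_bot_left, Subgroup.relIndex_bot_left, card_range_ptransHom, hS] at h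
    exact Nat.eq_of_mul_eq_mul_left (Fact.out : p.Prime).pos h
  have hconjS : g * ptrans p a * g⁻¹ ∈ S := by
    refine ⟨⟨_, G.mul_mem (G.mul_mem hg (hG.ptrans_mem a)) (G.inv_mem hg)⟩, ?_, rfl⟩
    change g (ptrans p a (g⁻¹ ∞)) = ∞
    rw [Equiv.Perm.inv_eq_iff_eq.mpr hg_infty.symm, ptrans_infty, hg_infty]
  have hpow : (g * ptrans p a * g⁻¹) ^ p = 1 := by
    rw [conj_pow, ptrans_pow_self, mul_one, mul_inv_cancel]
  obtain ⟨b, hb⟩ := Subgroup.mem_of_pow_eq_one_of_relIndex_lt hTS card_range_ptransHom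
    (by rw [hidx]; have := (Fact.out : p.Prime).pos; omega) hconjS hpow
  exact ⟨b.toAdd, hb.symm⟩

lemma eq_one_of_fixes_three_points (hG : IsPSL2Like p G) (hp : Odd p)
    {g : Equiv.Perm (OnePoint (ZMod p))} (hg : g ∈ G) (hg_infty : g ∞ = ∞)
    (hg_zero : g (0 : ZMod p) = (0 : ZMod p)) {z₀ : ZMod p} (hz₀ : z₀ ≠ 0)
    (hg_z₀ : g z₀ = z₀) : g = 1 := by
  obtain ⟨b, hb⟩ := hG.exists_ptrans_eq_conj hp hg hg_infty 1
  have haffine := apply_coe_eq_of_conj_ptrans hb hg_zero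
  have hb_one : b = 1 := by
    have h := haffine z₀
    rw [hg_z₀, zero_add, OnePoint.coe_eq_coe] at h
    exact (mul_eq_left₀ hz₀).mp h.symm
  ext x
  cases x with
  | infty => rw [hg_infty]; rfl
  | coe z => rw [haffine, hb_one, zero_add, mul_one]; rfl

lemma pow_three_eq_one (hG : IsPSL2Like p G) (hp : Odd p)
    {u : Equiv.Perm (OnePoint (ZMod p))} (hu : u ∈ G) {z₀ : ZMod p} (hz₀ : z₀ ≠ 0)
    (hu_infty : u ∞ = (0 : ZMod p)) (hu_zero : u (0 : ZMod p) = z₀) (hu_z₀ : u z₀ = ∞) :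
    u ^ 3 = 1 := by
  have happly : ∀ x, (u ^ 3) x = u (u (u x)) := fun x => by simp [pow_succ]
  refine hG.eq_one_of_fixes_three_points hp (pow_mem hu 3) ?_ ?_ hz₀ ?_ <;>
    simp only [happly, hu_infty, hu_zero, hu_z₀]

end IsPSL2Like

section NegPowInvolution

variable {p : ℕ} [Fact p.Prime] {n : ℕ} {lam : Equiv.Perm (OnePoint (ZMod p))}

lemma pow_pow_eq_self_of_neg_pow_involutive (hlam_sq : lam * lam = 1) (hn : Odd n)
    (hlam : ∀ z : ZMod p, z ≠ 0 → lam z = ↑(-z ^ n)) {z : ZMod p} (hz : z ≠ 0) :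
    (z ^ n) ^ n = z := by
  have h : lam (lam z) = z := by rw [← Equiv.Perm.mul_apply, hlam_sq, Equiv.Perm.one_apply]
  rw [hlam z hz, hlam _ (neg_ne_zero.mpr (pow_ne_zero n hz)), OnePoint.coe_eq_coe,
    hn.neg_pow, neg_neg] at h
  exact h

lemma one_sub_pow_pow_of_pow_three_eq_one (hlam_sq : lam * lam = 1) (hn : Odd n)
    (hlam : ∀ z : ZMod p, z ≠ 0 → lam z = ↑(-z ^ n)) (hcube : (lam * ptrans p 1) ^ 3 = 1)
    {z : ZMod p} (hz₀ : z ≠ 0) (hz₁ : z ≠ 1) : (1 - z ^ n) ^ n = 1 - (1 - z) ^ n := by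
  have hbraid : lam * ptrans p 1 * lam = ptrans p (-1) * lam * ptrans p (-1) := by
    have h : (lam * ptrans p 1 * lam) * (ptrans p 1 * lam * ptrans p 1) = 1 := by
      rw [← hcube]
      simp only [pow_succ, pow_zero, one_mul, mul_assoc]
    rw [eq_inv_of_mul_eq_one_left h, mul_inv_rev, mul_inv_rev, ptrans_inv,
      inv_eq_of_mul_eq_one_right hlam_sq, mul_assoc]
  have hzn : -z ^ n + 1 ≠ 0 := fun h => hz₁ <| by
    rw [← pow_pow_eq_self_of_neg_pow_involutive hlam_sq hn hlam hz₀, neg_add_eq_zero.mp h, one_pow]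
  have hz : z + -1 ≠ 0 := fun h => hz₁ (by linear_combination h)
  have h := congrArg (fun g : Equiv.Perm (OnePoint (ZMod p)) => g z) hbraid
  simp only [Equiv.Perm.mul_apply] at h
  rw [hlam z hz₀, ptrans_coe, hlam _ hzn, ptrans_coe, hlam _ hz, ptrans_coe,
    OnePoint.coe_eq_coe, show z + -1 = -(1 - z) by ring, hn.neg_pow] at h
  linear_combination -h

end NegPowInvolution

section PowInvolution

variable {F : Type*} [Field F] {n : ℕ}

lemma eq_of_pow_eq_pow_of_pow_pow_eq_self (hinv : ∀ z : F, z ≠ 0 → (z ^ n) ^ n = z) {a b : F}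
    (ha : a ≠ 0) (hb : b ≠ 0) (h : a ^ n = b ^ n) : a = b := by
  rw [← hinv a ha, ← hinv b hb, h]

/-- For a fixed point `u ∉ {0, 1}` the functional equation reads `(1 - u)ⁿ = 1 - (1 - u)ⁿ`,
so `(1 - u)ⁿ = 1/2`, and the involution `z ↦ zⁿ` allows only one such `u`, namely `-1`. -/
lemma eq_one_or_eq_neg_one_of_pow_eq_self (hn : Odd n) (h2 : (2 : F) ≠ 0)
    (hinv : ∀ z : F, z ≠ 0 → (z ^ n) ^ n = z)
    (hfun : ∀ z : F, z ≠ 0 → z ≠ 1 → (1 - z ^ n) ^ n = 1 - (1 - z) ^ n)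
    {z : F} (hz : z ≠ 0) (hfix : z ^ n = z) : z = 1 ∨ z = -1 := by
  have half : ∀ u : F, u ≠ 0 → u ≠ 1 → u ^ n = u → (1 - u) ^ n = 2⁻¹ := by
    intro u hu₀ hu₁ hu
    have h := hfun u hu₀ hu₁
    rw [hu] at h
    field_simp
    linear_combination h
  have hneg : (-1 : F) ≠ 1 := fun h => h2 (by linear_combination -h)
  by_cases hz₁ : z = 1
  · exact .inl hz₁
  refine .inr (sub_right_injective (b := (1 : F)) ?_)
  refine eq_of_pow_eq_pow_of_pow_pow_eq_self hinv (sub_ne_zero.mpr (Ne.symm hz₁))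
    (sub_ne_zero.mpr hneg.symm) ?_
  rw [half z hz hz₁ hfix,
    half (-1) (neg_ne_zero.mpr one_ne_zero) hneg (by rw [hn.neg_pow, one_pow])]

end PowInvolution

lemma coprime_sub_one_of_pow_eq_self {F : Type*} [Field F] [Finite F] {m n : ℕ}
    (hm : Odd m) (hmF : m ∣ Nat.card F - 1) (hn : 0 < n)
    (hfix : ∀ z : F, z ≠ 0 → z ^ n = z → z = 1 ∨ z = -1) : Nat.Coprime m (n - 1) := by
  refine Nat.coprime_of_dvd fun r hr hrm hrn => ?_
  have : Fact r.Prime := ⟨hr⟩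
  obtain ⟨ζ, hζ⟩ := exists_prime_orderOf_dvd_card' (G := Fˣ) r
    (by rw [Nat.card_units]; exact hrm.trans hmF)
  have hζn : (ζ : F) ^ n = ζ := by
    have h := orderOf_dvd_iff_pow_eq_one.mp (hζ ▸ hrn)
    rw [← Units.val_pow_eq_pow_val, ← Nat.sub_add_cancel hn, pow_succ, h, one_mul]
  have hζ2 : ζ ^ 2 = 1 := by
    ext
    rcases hfix ζ ζ.ne_zero hζn with h | h <;> simp [h]
  have hr2 : r = 2 :=
    (Nat.prime_dvd_prime_iff_eq hr Nat.prime_two).mp (hζ ▸ orderOf_dvd_of_pow_eq_one hζ2)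
  exact Nat.not_even_iff_odd.mpr hm (even_iff_two_dvd.mpr (hr2 ▸ hrm))

lemma Nat.two_mul_dvd_add_one {m n : ℕ} (hm : Odd m) (hn : Odd n) (hcop : Nat.Coprime m (n - 1))
    (hdvd : m ∣ n ^ 2 - 1) : 2 * m ∣ n + 1 := by
  rw [sq, mul_self_tsub_one] at hdvd
  exact Nat.Coprime.mul_dvd_of_dvd_of_dvd (Nat.coprime_two_left.mpr hm) hn.add_one.two_dvd
    (hcop.dvd_of_dvd_mul_right hdvd)

lemma ZMod.pow_eq_inv_of_dvd_add_one {p n : ℕ} [Fact p.Prime] (hdvd : p - 1 ∣ n + 1)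
    {z : ZMod p} (hz : z ≠ 0) : z ^ n = z⁻¹ := by
  obtain ⟨k, hk⟩ := hdvd
  refine eq_inv_of_mul_eq_one_left ?_
  rw [← pow_succ, hk, pow_mul, ZMod.pow_card_sub_one_eq_one hz, one_pow]

lemma negInvPerm_coe {p : ℕ} [Fact p.Prime] (z : ZMod p) :
    negInvPerm p z = if z = 0 then ∞ else ↑(-z⁻¹) := rfl

lemma eq_negInvPerm {p : ℕ} [Fact p.Prime] {lam : Equiv.Perm (OnePoint (ZMod p))}
    (hlam_zero : lam (0 : ZMod p) = ∞) (hlam_infty : lam ∞ = (0 : ZMod p))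
    (hlam : ∀ z : ZMod p, z ≠ 0 → lam z = ↑(-z⁻¹)) : lam = negInvPerm p := by
  ext x
  cases x with
  | infty => exact hlam_infty
  | coe z =>
    rw [negInvPerm_coe]
    split_ifs with hz
    · rw [hz, hlam_zero]
    · exact hlam z hz

theorem main_case_lambda_is_negInv_general
    (p : ℕ) [Fact p.Prime] (hp3 : p % 4 = 3)
    (G : Subgroup (Equiv.Perm (OnePoint (ZMod p))))
    (htrans : ∀ x y : OnePoint (ZMod p), ∃ g ∈ G, g x = y)
    (hcard : Nat.card G = (p ^ 3 - p) / 2)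
    (htransl : ∀ a : ZMod p, ptrans p a ∈ G)
    (lam : Equiv.Perm (OnePoint (ZMod p))) (hlamG : lam ∈ G)
    (hlam0 : lam (OnePoint.some (0 : ZMod p)) = OnePoint.infty)
    (hlaminf : lam OnePoint.infty = OnePoint.some (0 : ZMod p))
    (hlam2 : orderOf lam = 2)
    (n : ℕ) (hn : Odd n)
    (hlam : ∀ z : ZMod p, z ≠ 0 → lam (OnePoint.some z) = OnePoint.some (-z ^ n))
    (hdvd : (p - 1) / 2 ∣ n ^ 2 - 1) :
    (p - 1) ∣ (n + 1) ∧ lam = negInvPerm p ∧ negInvPerm p ∈ G := by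
  have hp : Odd p := Nat.odd_iff.mpr (by omega)
  have hm : Odd ((p - 1) / 2) := Nat.odd_iff.mpr (by omega)
  have h2 : (2 : ZMod p) ≠ 0 := Ring.two_ne_zero (by rw [ZMod.ringChar_zmod_n]; omega)
  have hG : IsPSL2Like p G := ⟨htrans, hcard, htransl⟩
  have hlam_sq : lam * lam = 1 := by rw [← sq, ← hlam2, pow_orderOf_eq_one]
  have hlam_one : lam (1 : ZMod p) = (-1 : ZMod p) := by rw [hlam 1 one_ne_zero, one_pow]
  have hcube : (lam * ptrans p 1) ^ 3 = 1 :=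
    hG.pow_three_eq_one hp (mul_mem hlamG (hG.ptrans_mem 1)) (neg_ne_zero.mpr one_ne_zero)
      (by simpa using hlaminf) (by simpa using hlam_one) (by simpa using hlam0)
  have hfix : ∀ z : ZMod p, z ≠ 0 → z ^ n = z → z = 1 ∨ z = -1 := fun z =>
    eq_one_or_eq_neg_one_of_pow_eq_self hn h2
      (fun _ => pow_pow_eq_self_of_neg_pow_involutive hlam_sq hn hlam)
      (fun _ => one_sub_pow_pow_of_pow_three_eq_one hlam_sq hn hlam hcube)
  have hcop := coprime_sub_one_of_pow_eq_self hm ⟨2, by rw [Nat.card_zmod]; omega⟩ hn.pos hfix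
  have hdiv : p - 1 ∣ n + 1 := by
    rw [show p - 1 = 2 * ((p - 1) / 2) by omega]
    exact Nat.two_mul_dvd_add_one hm hn hcop hdvd
  have heq : lam = negInvPerm p := eq_negInvPerm hlam0 hlaminf fun z hz => by
    rw [hlam z hz, ZMod.pow_eq_inv_of_dvd_add_one hdiv hz]
  exact ⟨hdiv, heq, heq ▸ hlamG⟩

theorem main_case_lambda_is_negInv
    (p : ℕ) [Fact p.Prime] (hp2 : p ≠ 2) (hp3 : p % 4 = 3)
    (G : Subgroup (Equiv.Perm (OnePoint (ZMod p))))
    (htrans : ∀ x y : OnePoint (ZMod p), ∃ g ∈ G, g x = y)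
    (hcard : Nat.card G = (p ^ 3 - p) / 2)
    (htransl : ∀ a : ZMod p, ptrans p a ∈ G)
    (lam : Equiv.Perm (OnePoint (ZMod p))) (hlamG : lam ∈ G)
    (hlam0 : lam (OnePoint.some (0 : ZMod p)) = OnePoint.infty)
    (hlaminf : lam OnePoint.infty = OnePoint.some (0 : ZMod p))
    (hlam2 : orderOf lam = 2)
    (n : ℕ) (hn : Odd n)
    (hlam : ∀ z : ZMod p, z ≠ 0 → lam (OnePoint.some z) = OnePoint.some (-z ^ n))
    (hdvd : (p - 1) / 2 ∣ n ^ 2 - 1) :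
    (p - 1) ∣ (n + 1) ∧ lam = negInvPerm p ∧ negInvPerm p ∈ G :=
  main_case_lambda_is_negInv_general p hp3 G htrans hcard htransl lam hlamG hlam0 hlaminf hlam2 n hn
    hlam hdvd
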